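/- Let t : ℕ → ℕ and let c, m be integers with c ≥ 2 and m ≥ 2 such that t(k) < c^(k−2) for every integer k ≥ m. Then for every integer e ≥ c and every integer n ≥ m one has t(n) = ⌊e^(n²) · ∑_{k≥0} t(k)·e^(−n·k)⌋ mod e^n. (That is, if the floor-mod extraction representation holds for base c for all n ≥ m, it also holds for every larger base.) -/

import Mathlib

/-! Put `B = e ^ n`. Then `e ^ (n ^ 2) * ∑ t k * e ^ (-n k) = ∑ t k * B ^ (n - k)`: the terms with
`k ≤ n` add up to a natural number congruent to `t n` modulo `B`, and the bound `t k < e ^ (k - 2)`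
makes the `j`-th term of the remaining tail smaller than `2 ^ -(j + 1)`, so the tail lies in `[0, 1)`
and the floor is exactly that natural number. Finally `t n < e ^ (n - 2) < B`. -/

open Finset

theorem mul_two_pow_lt_pow_pow {x n a : ℕ} (hx : 2 ≤ x) (hn : 2 ≤ n) (j : ℕ)
    (ha : a < x ^ (j + n - 1)) : a * 2 ^ (j + 1) < (x ^ n) ^ (j + 1) :=
  calc a * 2 ^ (j + 1) < x ^ (j + n - 1) * x ^ (j + 1) :=
        Nat.mul_lt_mul_of_lt_of_le ha (Nat.pow_le_pow_left hx _) (by positivity)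
    _ = x ^ (2 * j + n) := by rw [← pow_add]; congr 1; omega
    _ ≤ (x ^ n) ^ (j + 1) := by
        rw [← pow_mul]; exact Nat.pow_le_pow_right (by omega) (by nlinarith)

theorem tsum_div_pow_succ_lt_one {B : ℝ} {a : ℕ → ℝ} (ha : ∀ j, 0 ≤ a j)
    (hB : 0 < B) (h : ∀ j, a j * 2 ^ (j + 1) < B ^ (j + 1)) :
    Summable (fun j ↦ a j / B ^ (j + 1)) ∧ ∑' j, a j / B ^ (j + 1) < 1 := by
  have hlt : ∀ j, a j / B ^ (j + 1) < 1 / 2 / 2 ^ j := fun j ↦ by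
    rw [div_div, ← pow_succ', div_lt_div_iff₀ (by positivity) (by positivity), one_mul]
    exact h j
  have hnonneg : ∀ j, 0 ≤ a j / B ^ (j + 1) := fun j ↦ by have := ha j; positivity
  refine ⟨.of_nonneg_of_le hnonneg (fun j ↦ (hlt j).le) (summable_geometric_two' 1), ?_⟩
  calc ∑' j, a j / B ^ (j + 1) < ∑' j : ℕ, 1 / 2 / 2 ^ j :=
        Summable.tsum_lt_tsum_of_nonneg hnonneg (fun j ↦ (hlt j).le) (hlt 0)
          (summable_geometric_two' 1)
    _ = 1 := tsum_geometric_two' 1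

theorem floor_tsum_mul_zpow_sub {B : ℕ} (d : ℕ → ℕ) (N : ℕ)
    (hs : Summable (fun j ↦ (d (j + (N + 1)) : ℝ) / (B : ℝ) ^ (j + 1)))
    (ht : ∑' j, (d (j + (N + 1)) : ℝ) / (B : ℝ) ^ (j + 1) < 1) :
    ⌊∑' k, (d k : ℝ) * (B : ℝ) ^ ((N : ℤ) - k)⌋
      = ((∑ k ∈ range (N + 1), d k * B ^ (N - k) : ℕ) : ℤ) := by
  have htail : ∀ j, (d (j + (N + 1)) : ℝ) * (B : ℝ) ^ ((N : ℤ) - (j + (N + 1) : ℕ))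
      = (d (j + (N + 1)) : ℝ) / (B : ℝ) ^ (j + 1) := fun j ↦ by
    rw [show (N : ℤ) - (j + (N + 1) : ℕ) = -((j + 1 : ℕ) : ℤ) by push_cast; ring,
      zpow_neg, zpow_natCast, div_eq_mul_inv]
  have hfront : ∑ k ∈ range (N + 1), (d k : ℝ) * (B : ℝ) ^ ((N : ℤ) - k)
      = ((∑ k ∈ range (N + 1), d k * B ^ (N - k) : ℕ) : ℝ) := by
    push_cast
    refine sum_congr rfl fun k hk ↦ ?_
    rw [← zpow_natCast, Nat.cast_sub (by simpa [Nat.lt_succ_iff] using hk)]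
  have hs' : Summable (fun k ↦ (d k : ℝ) * (B : ℝ) ^ ((N : ℤ) - k)) :=
    (summable_nat_add_iff (N + 1)).mp (by simpa only [htail] using hs)
  have htail_nonneg : 0 ≤ ∑' j, (d (j + (N + 1)) : ℝ) / (B : ℝ) ^ (j + 1) :=
    tsum_nonneg fun j ↦ by positivity
  rw [← hs'.sum_add_tsum_nat_add (N + 1), hfront, Int.floor_natCast_add]
  simp only [htail, Int.floor_eq_zero_iff.mpr ⟨htail_nonneg, ht⟩, add_zero]

theorem sum_range_succ_mul_pow_sub_mod (d : ℕ → ℕ) (B N : ℕ) :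
    (∑ k ∈ range (N + 1), d k * B ^ (N - k)) % B = d N % B := by
  have hdvd : B ∣ ∑ k ∈ range N, d k * B ^ (N - k) :=
    dvd_sum fun k hk ↦ (dvd_pow_self B (by simp at hk; omega)).mul_left _
  obtain ⟨q, hq⟩ := hdvd
  rw [sum_range_succ, hq, Nat.sub_self, pow_zero, mul_one, Nat.mul_add_mod]

theorem pow_sq_mul_zpow_neg {x : ℝ} (hx : x ≠ 0) (n k : ℕ) :
    x ^ (n ^ 2) * x ^ (-((n * k : ℕ) : ℤ)) = (x ^ n) ^ ((n : ℤ) - k) := by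
  rw [← zpow_natCast x (n ^ 2), ← zpow_add₀ hx, ← zpow_natCast x n, ← zpow_mul]
  congr 1
  push_cast
  ring

theorem stmt_3 (t : ℕ → ℕ) (c m : ℕ) (hc : 2 ≤ c) (hm : 2 ≤ m)
    (hbound : ∀ k : ℕ, m ≤ k → t k < c ^ (k - 2)) :
    ∀ e : ℕ, c ≤ e → ∀ n : ℕ, m ≤ n →
      (t n : ℤ) =
        ⌊(e : ℝ) ^ (n ^ 2) * ∑' k : ℕ, (t k : ℝ) * (e : ℝ) ^ (-((n * k : ℕ) : ℤ))⌋
          % (e : ℤ) ^ n := by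
  intro e he n hn
  have he0 : 0 < e := by omega
  have hbound_e : ∀ k, m ≤ k → t k < e ^ (k - 2) := fun k hk ↦
    (hbound k hk).trans_le (Nat.pow_le_pow_left he _)
  have hrewrite : (e : ℝ) ^ (n ^ 2) * ∑' k, (t k : ℝ) * (e : ℝ) ^ (-((n * k : ℕ) : ℤ))
      = ∑' k, (t k : ℝ) * ((e ^ n : ℕ) : ℝ) ^ ((n : ℤ) - k) := by
    rw [← tsum_mul_left]
    refine tsum_congr fun k ↦ ?_
    rw [mul_left_comm, pow_sq_mul_zpow_neg (by positivity), Nat.cast_pow]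
  obtain ⟨hs, ht⟩ := tsum_div_pow_succ_lt_one (B := ((e ^ n : ℕ) : ℝ))
    (a := fun j ↦ (t (j + (n + 1)) : ℝ)) (fun _ ↦ by positivity) (by positivity) fun j ↦ by
      have htj := hbound_e (j + (n + 1)) (by omega)
      rw [show j + (n + 1) - 2 = j + n - 1 by omega] at htj
      exact_mod_cast mul_two_pow_lt_pow_pow (hc.trans he) (hm.trans hn) j htj
  have htn : t n < e ^ n :=
    (hbound_e n hn).trans_le (Nat.pow_le_pow_right (by omega) (by omega))
  rw [hrewrite, floor_tsum_mul_zpow_sub t n hs ht, ← Nat.cast_pow, ← Int.natCast_mod,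
    sum_range_succ_mul_pow_sub_mod, Nat.mod_eq_of_lt htn]
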